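/- Let A_0, …, A_{m−1} be invertible linear maps on ℝⁿ with the property that for every k and every unit vector e in ℝⁿ, Σ_{i=k}^{m−1} 1/(|A_k e_k|⋯|A_i e_i|) ≤ C (where e_k = e and e_{i+1} = A_i e_i/|A_i e_i|, indices reduced mod m and the sum taken over one period). Then for every unit vector e and every j ≥ 0, |A_{j−1}⋯A_0 e| ≥ (1/C)·(1 + 1/C)^{j·δ} for suitable δ > 0 depending only on C — i.e., uniform exponential expansion with constants depending only on C. -/

import Mathlib

/-!
Write `P k = b 0 ⋯ b (k-1)` and `S k = ∑_{k ≤ i < j} 1 / P (i+1)`. Factoring `1 / P (k+1)` out of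
`S (k+1)` and applying the hypothesis from the starting index `k+1` gives
`S (k+1) ≤ C / P (k+1) = C (S k - S (k+1))`, so the tails decay geometrically with ratio
`C / (C+1)`. The last tail `S (j-1) = 1 / P j` is then at most `C (C / (C+1)) ^ (j-1)`.
-/

open Finset

theorem sum_Ico_le_geom_of_tail_le {a : ℕ → ℝ} {C : ℝ} (hC : 0 ≤ C) {N : ℕ}
    (htail : ∀ k < N, ∑ i ∈ Ico (k + 1) N, a i ≤ C * a k) {k : ℕ} (hk : k ≤ N) :
    ∑ i ∈ Ico k N, a i ≤ (C / (C + 1)) ^ k * ∑ i ∈ range N, a i := by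
  rw [range_eq_Ico]
  refine le_geom (u := fun n => ∑ i ∈ Ico n N, a i) (by positivity) k fun m hm => ?_
  have hsplit := sum_eq_sum_Ico_succ_bot (by omega : m < N) a
  have htail_m := htail m (by omega)
  rw [hsplit, div_mul_eq_mul_div, le_div_iff₀ (by positivity)]
  linarith

theorem sum_Ico_inv_prod_range_le {b : ℕ → ℝ} (hb : ∀ l, 0 ≤ b l) {C : ℝ}
    (hsum : ∀ k N : ℕ, ∑ i ∈ Ico k N, (∏ l ∈ Icc k i, b l)⁻¹ ≤ C) (k N : ℕ) :
    ∑ i ∈ Ico (k + 1) N, (∏ l ∈ range (i + 1), b l)⁻¹ ≤ C * (∏ l ∈ range (k + 1), b l)⁻¹ := by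
  have hprod : ∀ i ∈ Ico (k + 1) N, (∏ l ∈ range (i + 1), b l)⁻¹
      = (∏ l ∈ range (k + 1), b l)⁻¹ * (∏ l ∈ Icc (k + 1) i, b l)⁻¹ := by
    intro i hi
    rw [← mul_inv, ← Ico_add_one_right_eq_Icc,
      prod_range_mul_prod_Ico b (by simp at hi; omega)]
  rw [sum_congr rfl hprod, ← mul_sum, mul_comm]
  exact mul_le_mul_of_nonneg_right (hsum (k + 1) N)
    (inv_nonneg.mpr (prod_nonneg fun l _ => hb l))

theorem bounded_sums_imply_exponential_growth (C : ℝ) (hC : 0 < C)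
    (b : ℕ → ℝ) (hb : ∀ l, 0 < b l)
    (hsum : ∀ k N : ℕ,
      ∑ i ∈ Finset.Ico k N, (∏ l ∈ Finset.Icc k i, b l)⁻¹ ≤ C) :
    ∀ j : ℕ, 1 ≤ j →
      (1 / C) * (1 + 1 / C) ^ (j - 1) ≤ ∏ l ∈ Finset.range j, b l := by
  intro j hj
  have htotal : ∑ i ∈ range j, (∏ l ∈ range (i + 1), b l)⁻¹ ≤ C := by
    simpa only [← Nat.Ico_zero_eq_range, Ico_add_one_right_eq_Icc] using hsum 0 j
  have hlast := sum_Ico_le_geom_of_tail_le hC.le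
    (fun k _ => sum_Ico_inv_prod_range_le (fun l => (hb l).le) hsum k j) (Nat.sub_le j 1)
  rw [Nat.Ico_pred_singleton hj, sum_singleton, Nat.sub_add_cancel hj] at hlast
  have hbound : (∏ l ∈ range j, b l)⁻¹ ≤ (C / (C + 1)) ^ (j - 1) * C :=
    hlast.trans (mul_le_mul_of_nonneg_left htotal (by positivity))
  calc (1 / C) * (1 + 1 / C) ^ (j - 1) = ((C / (C + 1)) ^ (j - 1) * C)⁻¹ := by
        rw [one_add_div hC.ne', mul_inv, ← inv_pow, inv_div, one_div, mul_comm]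
    _ ≤ ∏ l ∈ range j, b l :=
        (inv_le_comm₀ (by positivity) (prod_pos fun l _ => hb l)).mpr hbound
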